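/- Cut admissibility for the unfocused sequent calculus G3 as a corollary of focalization: if Γ ⊢ P and Γ, P ⊢ Q are derivable in G3, then Γ ⊢ Q is derivable in G3. This follows from fixing any polarization strategy (·)° that is a partial inverse of erasure mapping unpolarized propositions to negative polarized propositions, then using focalization, the ↓L rule, part 4 of focused cut admissibility, and de-focalization. -/
import Mathlib


namespace StructuralFocalization

/- Polarized propositional intuitionistic logic -/
mutual
inductive PProp : Type
  | atom : Nat → PProp
  | down : NProp → PProp
  | bot  : PProp
  | or   : PProp → PProp → PProp
  | top  : PProp
  | and  : PProp → PProp → PProp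
inductive NProp : Type
  | atom : Nat → NProp
  | up   : PProp → NProp
  | imp  : PProp → NProp → NProp
  | top  : NProp
  | and  : NProp → NProp → NProp
end

/- Hypotheses: negative propositions or suspended positives ⟨A⁺⟩ -/
inductive Hyp : Type
  | neg  : NProp → Hyp
  | susp : PProp → Hyp

/- Succedents: A⁺, A⁻, or suspended ⟨A⁻⟩ -/
inductive Succ : Type
  | pos  : PProp → Succ
  | neg  : NProp → Succ
  | susp : NProp → Succ

abbrev Ctx := List Hyp

def Succ.stable : Succ → Prop
  | .pos _ => True
  | .susp _ => True
  | .neg _ => False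

def Hyp.suspNormal : Hyp → Prop
  | .susp (PProp.atom _) => True
  | .susp _ => False
  | .neg _ => True

def Ctx.suspNormal (Γ : Ctx) : Prop := ∀ h ∈ Γ, h.suspNormal

def Succ.suspNormal : Succ → Prop
  | .susp (NProp.atom _) => True
  | .susp _ => False
  | _ => True

/- The focused sequent calculus (Figures 3 and 4 of "Structural focalization",
   with the generalized id⁺/id⁻ rules for arbitrary suspended propositions). -/
mutual
/-- Right focus: Γ ⊢ [A⁺] -/
inductive RFoc : Ctx → PProp → Prop
  | idP {Γ A} : Hyp.susp A ∈ Γ → RFoc Γ A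
  | downR {Γ A} : Inv Γ [] (Succ.neg A) → RFoc Γ (PProp.down A)
  | orR1 {Γ A B} : RFoc Γ A → RFoc Γ (PProp.or A B)
  | orR2 {Γ A B} : RFoc Γ B → RFoc Γ (PProp.or A B)
  | topR {Γ} : RFoc Γ PProp.top
  | andR {Γ A B} : RFoc Γ A → RFoc Γ B → RFoc Γ (PProp.and A B)
/-- Inversion: Γ ; Ω ⊢ U -/
inductive Inv : Ctx → List PProp → Succ → Prop
  | focR {Γ A} : RFoc Γ A → Inv Γ [] (Succ.pos A)
  | focL {Γ A U} : Hyp.neg A ∈ Γ → Succ.stable U → LFoc Γ A U → Inv Γ [] U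
  | etaP {Γ p Ω U} : Inv (Hyp.susp (PProp.atom p) :: Γ) Ω U → Inv Γ (PProp.atom p :: Ω) U
  | downL {Γ A Ω U} : Inv (Hyp.neg A :: Γ) Ω U → Inv Γ (PProp.down A :: Ω) U
  | botL {Γ Ω U} : Inv Γ (PProp.bot :: Ω) U
  | orL {Γ A B Ω U} : Inv Γ (A :: Ω) U → Inv Γ (B :: Ω) U → Inv Γ (PProp.or A B :: Ω) U
  | topPL {Γ Ω U} : Inv Γ Ω U → Inv Γ (PProp.top :: Ω) U
  | andPL {Γ A B Ω U} : Inv Γ (A :: B :: Ω) U → Inv Γ (PProp.and A B :: Ω) U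
  | etaN {Γ p} : Inv Γ [] (Succ.susp (NProp.atom p)) → Inv Γ [] (Succ.neg (NProp.atom p))
  | upR {Γ A} : Inv Γ [] (Succ.pos A) → Inv Γ [] (Succ.neg (NProp.up A))
  | impR {Γ A B} : Inv Γ [A] (Succ.neg B) → Inv Γ [] (Succ.neg (NProp.imp A B))
  | topNR {Γ} : Inv Γ [] (Succ.neg NProp.top)
  | andNR {Γ A B} : Inv Γ [] (Succ.neg A) → Inv Γ [] (Succ.neg B) →
      Inv Γ [] (Succ.neg (NProp.and A B))
/-- Left focus: Γ ; [A⁻] ⊢ U -/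
inductive LFoc : Ctx → NProp → Succ → Prop
  | idN {Γ A} : LFoc Γ A (Succ.susp A)
  | upL {Γ A U} : Inv Γ [A] U → LFoc Γ (NProp.up A) U
  | impL {Γ A B U} : RFoc Γ A → LFoc Γ B U → LFoc Γ (NProp.imp A B) U
  | andL1 {Γ A B U} : LFoc Γ A U → LFoc Γ (NProp.and A B) U
  | andL2 {Γ A B U} : LFoc Γ B U → LFoc Γ (NProp.and A B) U
end

/- Unpolarized propositions and Kleene's G3 -/
inductive UProp : Type
  | atom : Nat → UProp
  | bot  : UProp
  | or   : UProp → UProp → UProp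
  | top  : UProp
  | and  : UProp → UProp → UProp
  | imp  : UProp → UProp → UProp

inductive G3 : List UProp → UProp → Prop
  | init {Γ p} : UProp.atom p ∈ Γ → G3 Γ (UProp.atom p)
  | botL {Γ Q} : UProp.bot ∈ Γ → G3 Γ Q
  | orR1 {Γ A B} : G3 Γ A → G3 Γ (UProp.or A B)
  | orR2 {Γ A B} : G3 Γ B → G3 Γ (UProp.or A B)
  | orL {Γ A B Q} : UProp.or A B ∈ Γ → G3 (A :: Γ) Q → G3 (B :: Γ) Q → G3 Γ Q
  | topR {Γ} : G3 Γ UProp.top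
  | andR {Γ A B} : G3 Γ A → G3 Γ B → G3 Γ (UProp.and A B)
  | andL1 {Γ A B Q} : UProp.and A B ∈ Γ → G3 (A :: Γ) Q → G3 Γ Q
  | andL2 {Γ A B Q} : UProp.and A B ∈ Γ → G3 (B :: Γ) Q → G3 Γ Q
  | impR {Γ A B} : G3 (A :: Γ) B → G3 Γ (UProp.imp A B)
  | impL {Γ A B Q} : UProp.imp A B ∈ Γ → G3 Γ A → G3 (B :: Γ) Q → G3 Γ Q

/-- G3 with an ordered auxiliary context Ψ: Γ; Ψ ⊢ Q -/
inductive G3Psi : List UProp → List UProp → UProp → Prop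
  | cons {Γ P Ψ Q} : G3Psi (P :: Γ) Ψ Q → G3Psi Γ (P :: Ψ) Q
  | nil {Γ Q} : G3 Γ Q → G3Psi Γ [] Q

/- Erasure -/
mutual
def eraseP : PProp → UProp
  | .atom p => .atom p
  | .down A => eraseN A
  | .bot => .bot
  | .or A B => .or (eraseP A) (eraseP B)
  | .top => .top
  | .and A B => .and (eraseP A) (eraseP B)
def eraseN : NProp → UProp
  | .atom p => .atom p
  | .up A => eraseP A
  | .imp A B => .imp (eraseP A) (eraseN B)
  | .top => .top
  | .and A B => .and (eraseN A) (eraseN B)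
end

def eraseHyp : Hyp → UProp
  | .neg A => eraseN A
  | .susp A => eraseP A

def eraseCtx (Γ : Ctx) : List UProp := Γ.map eraseHyp

def eraseSucc : Succ → UProp
  | .pos A => eraseP A
  | .neg A => eraseN A
  | .susp A => eraseN A

/-- Type-valued mirror of G3, so derivations can be measured. -/
inductive G3T : List UProp → UProp → Type
  | init {Γ p} : UProp.atom p ∈ Γ → G3T Γ (UProp.atom p)
  | botL {Γ Q} : UProp.bot ∈ Γ → G3T Γ Q
  | orR1 {Γ A B} : G3T Γ A → G3T Γ (UProp.or A B)
  | orR2 {Γ A B} : G3T Γ B → G3T Γ (UProp.or A B)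
  | orL {Γ A B Q} : UProp.or A B ∈ Γ → G3T (A :: Γ) Q → G3T (B :: Γ) Q → G3T Γ Q
  | topR {Γ} : G3T Γ UProp.top
  | andR {Γ A B} : G3T Γ A → G3T Γ B → G3T Γ (UProp.and A B)
  | andL1 {Γ A B Q} : UProp.and A B ∈ Γ → G3T (A :: Γ) Q → G3T Γ Q
  | andL2 {Γ A B Q} : UProp.and A B ∈ Γ → G3T (B :: Γ) Q → G3T Γ Q
  | impR {Γ A B} : G3T (A :: Γ) B → G3T Γ (UProp.imp A B)
  | impL {Γ A B Q} : UProp.imp A B ∈ Γ → G3T Γ A → G3T (B :: Γ) Q → G3T Γ Q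

def G3T.size : ∀ {Γ Q}, G3T Γ Q → Nat
  | _, _, .init _ => 1
  | _, _, .botL _ => 1
  | _, _, .orR1 d => d.size + 1
  | _, _, .orR2 d => d.size + 1
  | _, _, .orL _ d1 d2 => d1.size + d2.size + 1
  | _, _, .topR => 1
  | _, _, .andR d1 d2 => d1.size + d2.size + 1
  | _, _, .andL1 _ d => d.size + 1
  | _, _, .andL2 _ d => d.size + 1
  | _, _, .impR d => d.size + 1
  | _, _, .impL _ d1 d2 => d1.size + d2.size + 1

def G3T.wk : ∀ {Γ Γ' Q}, Γ ⊆ Γ' → G3T Γ Q → G3T Γ' Q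
  | _, _, _, s, .init h => .init (s h)
  | _, _, _, s, .botL h => .botL (s h)
  | _, _, _, s, .orR1 d => .orR1 (d.wk s)
  | _, _, _, s, .orR2 d => .orR2 (d.wk s)
  | _, _, _, s, .orL h d1 d2 =>
      .orL (s h) (d1.wk (List.cons_subset_cons _ s)) (d2.wk (List.cons_subset_cons _ s))
  | _, _, _, _, .topR => .topR
  | _, _, _, s, .andR d1 d2 => .andR (d1.wk s) (d2.wk s)
  | _, _, _, s, .andL1 h d => .andL1 (s h) (d.wk (List.cons_subset_cons _ s))
  | _, _, _, s, .andL2 h d => .andL2 (s h) (d.wk (List.cons_subset_cons _ s))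
  | _, _, _, s, .impR d => .impR (d.wk (List.cons_subset_cons _ s))
  | _, _, _, s, .impL h d1 d2 =>
      .impL (s h) (d1.wk s) (d2.wk (List.cons_subset_cons _ s))

theorem G3T.size_wk : ∀ {Γ Γ' Q} (s : Γ ⊆ Γ') (d : G3T Γ Q), (d.wk s).size = d.size := by
  intro Γ Γ' Q s d
  induction d generalizing Γ' <;> simp [G3T.wk, G3T.size, *]

theorem G3T.toG3 : ∀ {Γ Q}, G3T Γ Q → G3 Γ Q := by
  intro Γ Q d
  induction d with
  | init h => exact .init h
  | botL h => exact .botL h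
  | orR1 _ ih => exact .orR1 ih
  | orR2 _ ih => exact .orR2 ih
  | orL h _ _ ih1 ih2 => exact .orL h ih1 ih2
  | topR => exact .topR
  | andR _ _ ih1 ih2 => exact .andR ih1 ih2
  | andL1 h _ ih => exact .andL1 h ih
  | andL2 h _ ih => exact .andL2 h ih
  | impR _ ih => exact .impR ih
  | impL h _ _ ih1 ih2 => exact .impL h ih1 ih2

theorem G3T.ofG3 : ∀ {Γ Q}, G3 Γ Q → Nonempty (G3T Γ Q) := by
  intro Γ Q h
  induction h with
  | init h => exact ⟨.init h⟩
  | botL h => exact ⟨.botL h⟩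
  | orR1 _ ih => obtain ⟨d⟩ := ih; exact ⟨.orR1 d⟩
  | orR2 _ ih => obtain ⟨d⟩ := ih; exact ⟨.orR2 d⟩
  | orL h _ _ ih1 ih2 => obtain ⟨d1⟩ := ih1; obtain ⟨d2⟩ := ih2; exact ⟨.orL h d1 d2⟩
  | topR => exact ⟨.topR⟩
  | andR _ _ ih1 ih2 => obtain ⟨d1⟩ := ih1; obtain ⟨d2⟩ := ih2; exact ⟨.andR d1 d2⟩
  | andL1 h _ ih => obtain ⟨d⟩ := ih; exact ⟨.andL1 h d⟩
  | andL2 h _ ih => obtain ⟨d⟩ := ih; exact ⟨.andL2 h d⟩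
  | impR _ ih => obtain ⟨d⟩ := ih; exact ⟨.impR d⟩
  | impL h _ _ ih1 ih2 => obtain ⟨d1⟩ := ih1; obtain ⟨d2⟩ := ih2; exact ⟨.impL h d1 d2⟩

def psize : UProp → Nat
  | .atom _ => 1
  | .bot => 1
  | .top => 1
  | .or a b => psize a + psize b + 1
  | .and a b => psize a + psize b + 1
  | .imp a b => psize a + psize b + 1

theorem subCons {A : UProp} {Γ : List UProp} : Γ ⊆ A :: Γ := fun _ h => List.mem_cons_of_mem _ h

theorem exch {A P : UProp} {Γ : List UProp} : A :: P :: Γ ⊆ P :: A :: Γ := by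
  intro x hx; simp [List.mem_cons] at hx ⊢; tauto

/-- Principal cut for ⊥. -/
theorem pcut_bot : ∀ {Γ Q}, G3T Γ UProp.bot → Nonempty (G3T Γ Q) := by
  intro Γ Q d
  generalize hB : UProp.bot = B at d
  induction d generalizing Q <;> try (cases hB)
  case botL h => exact ⟨.botL h⟩
  case orL h _ _ ih1 ih2 =>
    obtain ⟨f1⟩ := ih1 rfl (Q := Q); obtain ⟨f2⟩ := ih2 rfl (Q := Q)
    exact ⟨.orL h f1 f2⟩
  case andL1 h _ ih => obtain ⟨f⟩ := ih rfl (Q := Q); exact ⟨.andL1 h f⟩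
  case andL2 h _ ih => obtain ⟨f⟩ := ih rfl (Q := Q); exact ⟨.andL2 h f⟩
  case impL h d1 _ ih1 ih2 =>
    obtain ⟨f⟩ := ih2 rfl (Q := Q)
    exact ⟨.impL h d1 f⟩

theorem pcut_or {A B : UProp}
    (cutA : ∀ {Γ Q}, G3T Γ A → G3T (A :: Γ) Q → Nonempty (G3T Γ Q))
    (cutB : ∀ {Γ Q}, G3T Γ B → G3T (B :: Γ) Q → Nonempty (G3T Γ Q)) :
    ∀ {Γ} (_ : G3T Γ (UProp.or A B)) {Q},
      G3T (A :: Γ) Q → G3T (B :: Γ) Q → Nonempty (G3T Γ Q) := by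
  intro Γ d
  generalize hB : UProp.or A B = C at d
  induction d <;> (try cases hB) <;> intro Q g1 g2
  case orR1 d1 _ => exact cutA d1 g1
  case orR2 d1 _ => exact cutB d1 g2
  case botL h => exact ⟨.botL h⟩
  case orL h _ _ ih1 ih2 =>
    obtain ⟨f1⟩ := ih1 rfl (g1.wk (List.cons_subset_cons _ subCons))
      (g2.wk (List.cons_subset_cons _ subCons))
    obtain ⟨f2⟩ := ih2 rfl (g1.wk (List.cons_subset_cons _ subCons))
      (g2.wk (List.cons_subset_cons _ subCons))
    exact ⟨.orL h f1 f2⟩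
  case andL1 h _ ih =>
    obtain ⟨f⟩ := ih rfl (g1.wk (List.cons_subset_cons _ subCons))
      (g2.wk (List.cons_subset_cons _ subCons))
    exact ⟨.andL1 h f⟩
  case andL2 h _ ih =>
    obtain ⟨f⟩ := ih rfl (g1.wk (List.cons_subset_cons _ subCons))
      (g2.wk (List.cons_subset_cons _ subCons))
    exact ⟨.andL2 h f⟩
  case impL h d1 _ _ ih2 =>
    obtain ⟨f⟩ := ih2 rfl (g1.wk (List.cons_subset_cons _ subCons))
      (g2.wk (List.cons_subset_cons _ subCons))
    exact ⟨.impL h d1 f⟩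

theorem pcut_and1 {A B : UProp}
    (cutA : ∀ {Γ Q}, G3T Γ A → G3T (A :: Γ) Q → Nonempty (G3T Γ Q)) :
    ∀ {Γ} (_ : G3T Γ (UProp.and A B)) {Q},
      G3T (A :: Γ) Q → Nonempty (G3T Γ Q) := by
  intro Γ d
  generalize hB : UProp.and A B = C at d
  induction d <;> (try cases hB) <;> intro Q g1
  case andR d1 _ d2 _ => exact cutA d1 g1
  case botL h => exact ⟨.botL h⟩
  case orL h _ _ ih1 ih2 =>
    obtain ⟨f1⟩ := ih1 rfl (g1.wk (List.cons_subset_cons _ subCons))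
    obtain ⟨f2⟩ := ih2 rfl (g1.wk (List.cons_subset_cons _ subCons))
    exact ⟨.orL h f1 f2⟩
  case andL1 h _ ih =>
    obtain ⟨f⟩ := ih rfl (g1.wk (List.cons_subset_cons _ subCons))
    exact ⟨.andL1 h f⟩
  case andL2 h _ ih =>
    obtain ⟨f⟩ := ih rfl (g1.wk (List.cons_subset_cons _ subCons))
    exact ⟨.andL2 h f⟩
  case impL h d1 _ _ ih2 =>
    obtain ⟨f⟩ := ih2 rfl (g1.wk (List.cons_subset_cons _ subCons))
    exact ⟨.impL h d1 f⟩

theorem pcut_and2 {A B : UProp}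
    (cutB : ∀ {Γ Q}, G3T Γ B → G3T (B :: Γ) Q → Nonempty (G3T Γ Q)) :
    ∀ {Γ} (_ : G3T Γ (UProp.and A B)) {Q},
      G3T (B :: Γ) Q → Nonempty (G3T Γ Q) := by
  intro Γ d
  generalize hB : UProp.and A B = C at d
  induction d <;> (try cases hB) <;> intro Q g1
  case andR d1 _ d2 _ => exact cutB d2 g1
  case botL h => exact ⟨.botL h⟩
  case orL h _ _ ih1 ih2 =>
    obtain ⟨f1⟩ := ih1 rfl (g1.wk (List.cons_subset_cons _ subCons))
    obtain ⟨f2⟩ := ih2 rfl (g1.wk (List.cons_subset_cons _ subCons))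
    exact ⟨.orL h f1 f2⟩
  case andL1 h _ ih =>
    obtain ⟨f⟩ := ih rfl (g1.wk (List.cons_subset_cons _ subCons))
    exact ⟨.andL1 h f⟩
  case andL2 h _ ih =>
    obtain ⟨f⟩ := ih rfl (g1.wk (List.cons_subset_cons _ subCons))
    exact ⟨.andL2 h f⟩
  case impL h d1 _ _ ih2 =>
    obtain ⟨f⟩ := ih2 rfl (g1.wk (List.cons_subset_cons _ subCons))
    exact ⟨.impL h d1 f⟩

theorem pcut_imp {A B : UProp}
    (cutA : ∀ {Γ Q}, G3T Γ A → G3T (A :: Γ) Q → Nonempty (G3T Γ Q))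
    (cutB : ∀ {Γ Q}, G3T Γ B → G3T (B :: Γ) Q → Nonempty (G3T Γ Q)) :
    ∀ {Γ} (_ : G3T Γ (UProp.imp A B)) {Q},
      G3T Γ A → G3T (B :: Γ) Q → Nonempty (G3T Γ Q) := by
  intro Γ d
  generalize hB : UProp.imp A B = C at d
  induction d <;> (try cases hB) <;> intro Q ga gb
  case impR d1 _ =>
    obtain ⟨b⟩ := cutA ga d1
    exact cutB b gb
  case botL h => exact ⟨.botL h⟩
  case orL h _ _ ih1 ih2 =>
    obtain ⟨f1⟩ := ih1 rfl (ga.wk subCons) (gb.wk (List.cons_subset_cons _ subCons))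
    obtain ⟨f2⟩ := ih2 rfl (ga.wk subCons) (gb.wk (List.cons_subset_cons _ subCons))
    exact ⟨.orL h f1 f2⟩
  case andL1 h _ ih =>
    obtain ⟨f⟩ := ih rfl (ga.wk subCons) (gb.wk (List.cons_subset_cons _ subCons))
    exact ⟨.andL1 h f⟩
  case andL2 h _ ih =>
    obtain ⟨f⟩ := ih rfl (ga.wk subCons) (gb.wk (List.cons_subset_cons _ subCons))
    exact ⟨.andL2 h f⟩
  case impL h d1 _ _ ih2 =>
    obtain ⟨f⟩ := ih2 rfl (ga.wk subCons) (gb.wk (List.cons_subset_cons _ subCons))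
    exact ⟨.impL h d1 f⟩

theorem cut_aux : ∀ n m (P : UProp) (Γ : List UProp) (Q : UProp)
    (d : G3T Γ P) (e : G3T (P :: Γ) Q),
    psize P < n → d.size + e.size < m → Nonempty (G3T Γ Q) := by
  intro n
  induction n with
  | zero => intro m P Γ Q d e hP hm; omega
  | succ n ihn =>
    intro m
    induction m with
    | zero => intro P Γ Q d e hP hm; omega
    | succ m ihm =>
      intro P Γ Q d e hP hm
      cases e with
      | init h =>
        rcases List.mem_cons.mp h with heq | hmem
        · subst heq; exact ⟨d⟩
        · exact ⟨.init hmem⟩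
      | botL h =>
        rcases List.mem_cons.mp h with heq | hmem
        · subst heq; exact pcut_bot d
        · exact ⟨.botL hmem⟩
      | topR => exact ⟨.topR⟩
      | orR1 e1 =>
        obtain ⟨f⟩ := ihm P Γ _ d e1 hP
          (by simp only [G3T.size] at hm; omega)
        exact ⟨.orR1 f⟩
      | orR2 e1 =>
        obtain ⟨f⟩ := ihm P Γ _ d e1 hP
          (by simp only [G3T.size] at hm; omega)
        exact ⟨.orR2 f⟩
      | andR e1 e2 =>
        obtain ⟨f1⟩ := ihm P Γ _ d e1 hP
          (by simp only [G3T.size] at hm; omega)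
        obtain ⟨f2⟩ := ihm P Γ _ d e2 hP
          (by simp only [G3T.size] at hm; omega)
        exact ⟨.andR f1 f2⟩
      | impR e1 =>
        obtain ⟨f⟩ := ihm P _ _ (d.wk subCons) (e1.wk exch) hP
          (by simp only [G3T.size, G3T.size_wk] at hm ⊢; omega)
        exact ⟨.impR f⟩
      | orL h e1 e2 =>
        obtain ⟨f1⟩ := ihm P _ _ (d.wk subCons) (e1.wk exch) hP
          (by simp only [G3T.size, G3T.size_wk] at hm ⊢; omega)
        obtain ⟨f2⟩ := ihm P _ _ (d.wk subCons) (e2.wk exch) hP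
          (by simp only [G3T.size, G3T.size_wk] at hm ⊢; omega)
        rcases List.mem_cons.mp h with heq | hmem
        · subst heq
          exact pcut_or
            (fun {Γ' Q'} dA eA => ihn (dA.size + eA.size + 1) _ Γ' Q' dA eA
              (by simp only [psize] at hP; omega) (Nat.lt_succ_self _))
            (fun {Γ' Q'} dB eB => ihn (dB.size + eB.size + 1) _ Γ' Q' dB eB
              (by simp only [psize] at hP; omega) (Nat.lt_succ_self _))
            d f1 f2
        · exact ⟨.orL hmem f1 f2⟩
      | andL1 h e1 =>
        obtain ⟨f1⟩ := ihm P _ _ (d.wk subCons) (e1.wk exch) hP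
          (by simp only [G3T.size, G3T.size_wk] at hm ⊢; omega)
        rcases List.mem_cons.mp h with heq | hmem
        · subst heq
          exact pcut_and1
            (fun {Γ' Q'} dA eA => ihn (dA.size + eA.size + 1) _ Γ' Q' dA eA
              (by simp only [psize] at hP; omega) (Nat.lt_succ_self _))
            d f1
        · exact ⟨.andL1 hmem f1⟩
      | andL2 h e1 =>
        obtain ⟨f1⟩ := ihm P _ _ (d.wk subCons) (e1.wk exch) hP
          (by simp only [G3T.size, G3T.size_wk] at hm ⊢; omega)
        rcases List.mem_cons.mp h with heq | hmem
        · subst heq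
          exact pcut_and2
            (fun {Γ' Q'} dB eB => ihn (dB.size + eB.size + 1) _ Γ' Q' dB eB
              (by simp only [psize] at hP; omega) (Nat.lt_succ_self _))
            d f1
        · exact ⟨.andL2 hmem f1⟩
      | impL h ea eb =>
        obtain ⟨fa⟩ := ihm P _ _ d ea hP
          (by simp only [G3T.size] at hm; omega)
        obtain ⟨fb⟩ := ihm P _ _ (d.wk subCons) (eb.wk exch) hP
          (by simp only [G3T.size, G3T.size_wk] at hm ⊢; omega)
        rcases List.mem_cons.mp h with heq | hmem
        · subst heq
          exact pcut_imp
            (fun {Γ' Q'} dA eA => ihn (dA.size + eA.size + 1) _ Γ' Q' dA eA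
              (by simp only [psize] at hP; omega) (Nat.lt_succ_self _))
            (fun {Γ' Q'} dB eB => ihn (dB.size + eB.size + 1) _ Γ' Q' dB eB
              (by simp only [psize] at hP; omega) (Nat.lt_succ_self _))
            d fa fb
        · exact ⟨.impL hmem fa fb⟩

theorem g3_cut' {Γ : List UProp} {P Q : UProp}
    (h1 : G3 Γ P) (h2 : G3 (P :: Γ) Q) : G3 Γ Q := by
  obtain ⟨d⟩ := G3T.ofG3 h1
  obtain ⟨e⟩ := G3T.ofG3 h2
  obtain ⟨f⟩ := cut_aux (psize P + 1) (d.size + e.size + 1) P Γ Q d e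
    (Nat.lt_succ_self _) (Nat.lt_succ_self _)
  exact f.toG3

/-- Cut admissibility for the unfocused sequent calculus G3. -/
theorem g3_cut {Γ : List UProp} {P Q : UProp}
    (h1 : G3 Γ P) (h2 : G3 (P :: Γ) Q) :
    G3 Γ Q := g3_cut' h1 h2

end StructuralFocalization
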